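/- Let P be a strictly positive joint distribution over finite-valued random variables X = (X1, X2), and suppose the partitioned ratio P(X1, X2) / (P(X1)·P(X2)) can be written as (1/Z) · ∏_{B ∈ 𝐁(G)} φ_B(X_B), where 𝐁(G) is the set of passages of a graph G relative to the partition (X1, X2), Z > 0 is a constant, and each factor φ_B is a strictly positive function of the variables X_B only. Then P is a Partitioned Markov Network with respect to G; in particular, for every X_i ∈ X1, P(X_i | X1 ∪ X_{N(i)} \ X_i) = P(X_i | all other variables). -/

import Mathlib

open Finset
open scoped Classical

variable {ι V : Type*}

/-- The marginal probability `P(X_A = x_A)`. -/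
noncomputable def margin [Fintype ι] [Fintype V] [DecidableEq ι] [DecidableEq V]
    (P : (ι → V) → ℝ) (A : Finset ι) (x : ι → V) : ℝ :=
  ∑ y ∈ Finset.univ.filter (fun y : ι → V => ∀ i ∈ A, y i = x i), P y

/-- `P` is a partitioned Markov network w.r.t. `G` for the partition `(X1, X1ᶜ)`. -/
noncomputable def IsPMN [Fintype ι] [Fintype V] [DecidableEq ι] [DecidableEq V]
    (P : (ι → V) → ℝ) (G : SimpleGraph ι) [DecidableRel G.Adj] (X1 : Finset ι) : Prop :=
  (∀ i ∈ X1, ∀ x : ι → V,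
      margin P (insert i ((X1 ∪ G.neighborFinset i).erase i)) x
          / margin P ((X1 ∪ G.neighborFinset i).erase i) x
        = P x / margin P (Finset.univ.erase i) x) ∧
  (∀ i ∈ X1ᶜ, ∀ x : ι → V,
      margin P (insert i ((X1ᶜ ∪ G.neighborFinset i).erase i)) x
          / margin P ((X1ᶜ ∪ G.neighborFinset i).erase i) x
        = P x / margin P (Finset.univ.erase i) x)

/-- `B` is a passage of `G` relative to the partition `(X1, X1ᶜ)`. -/
def IsPassage [Fintype ι] [DecidableEq ι] (G : SimpleGraph ι) (X1 : Finset ι) (B : G.Subgraph) : Prop :=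
  (B.verts ∩ ↑X1).Nonempty ∧ (B.verts ∩ ↑(X1ᶜ)).Nonempty ∧
    ∀ u ∈ B.verts ∩ ↑X1, ∀ v ∈ B.verts ∩ ↑(X1ᶜ), B.Adj u v

noncomputable instance subgraphFintype [Finite ι] (G : SimpleGraph ι) :
    Fintype G.Subgraph := by
  have : Finite G.Subgraph :=
    Finite.of_injective (fun B => (B.verts, B.Adj)) (by
      intro a b h
      simp only [Prod.mk.injEq] at h
      exact SimpleGraph.Subgraph.ext h.1 h.2)
  exact Fintype.ofFinite _

/-! For `i ∈ X1`, split the factorization `P = P(X1) P(X2) Z⁻¹ ∏_B φ_B` as `f · g`, where `f`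
collects `P(X1)` and the factors of the passages through `i`. A passage through `i` has all its
`X2`-vertices among the neighbours of `i`, so `f` depends only on `X1 ∪ N(i)`, while `g` does not
depend on `x_i`. For such a product both conditionals of `x_i`, given `X1 ∪ N(i) \ {i}` and given
all other variables, equal `f x / ∑_v f (x[i ↦ v])`. The case `i ∈ X2` is symmetric, since passages
relative to `X1` and to `X2` are the same subgraphs. -/

open Function

theorem div_sum_update_mul [DecidableEq ι] [Fintype V] {f G : (ι → V) → ℝ} {i : ι} {x : ι → V}
    (hG : ∀ v, G (update x i v) = G x) (hGx : G x ≠ 0) :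
    f x * G x / ∑ v, f (update x i v) * G (update x i v)
      = f x / ∑ v, f (update x i v) := by
  simp only [hG, ← sum_mul]
  exact mul_div_mul_right _ _ hGx

section Margin

variable [Fintype ι] [DecidableEq ι] [Fintype V] [DecidableEq V]

theorem margin_univ (P : (ι → V) → ℝ) (x : ι → V) : margin P univ x = P x := by
  have : univ.filter (fun y : ι → V => ∀ i ∈ univ, y i = x i) = {x} := by
    ext y; simp [funext_iff]
  rw [margin, this, sum_singleton]

theorem dependsOn_margin (P : (ι → V) → ℝ) (A : Finset ι) :
    DependsOn (margin P A) (A : Set ι) := by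
  intro x y hxy
  refine sum_congr (filter_congr fun z _ => forall₂_congr fun j hj => ?_) fun _ _ => rfl
  rw [hxy j hj]

theorem margin_pos {P : (ι → V) → ℝ} (hP : ∀ x, 0 < P x) (A : Finset ι) (x : ι → V) :
    0 < margin P A x :=
  sum_pos (fun y _ => hP y) ⟨x, by simp⟩

theorem margin_erase (P : (ι → V) → ℝ) {A : Finset ι} {i : ι} (hi : i ∈ A) (x : ι → V) :
    margin P (A.erase i) x = ∑ v, margin P A (update x i v) := by
  rw [margin, ← sum_fiberwise _ (· i)]
  refine sum_congr rfl fun v _ => sum_congr ?_ fun _ _ => rfl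
  ext y
  simp only [filter_filter, mem_filter, mem_univ, true_and, mem_erase]
  constructor
  · rintro ⟨hy, rfl⟩ j hj
    by_cases hji : j = i
    · subst hji; simp
    · rw [update_of_ne hji, hy j ⟨hji, hj⟩]
  · intro hy
    refine ⟨fun j ⟨hji, hj⟩ => by rw [hy j hj, update_of_ne hji], ?_⟩
    simpa using hy i hi

theorem margin_mul_of_dependsOn {f : (ι → V) → ℝ} {A : Finset ι} (hf : DependsOn f A)
    (g : (ι → V) → ℝ) (x : ι → V) :
    margin (fun y => f y * g y) A x = f x * margin g A x := by
  rw [margin, margin, mul_sum]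
  refine sum_congr rfl fun y hy => ?_
  rw [hf (by simpa using hy)]

theorem margin_update_of_dependsOn {g : (ι → V) → ℝ} {i : ι} (hg : DependsOn g ({i}ᶜ : Set ι))
    (A : Finset ι) (x : ι → V) (v w : V) :
    margin g A (update x i v) = margin g A (update x i w) := by
  by_cases hi : i ∈ A
  swap
  · exact dependsOn_margin g A fun j hj => by
      have hji : j ≠ i := ne_of_mem_of_not_mem hj hi
      rw [update_of_ne hji, update_of_ne hji]
  have update_agrees : ∀ (y : ι → V) (v w : V), (∀ j ∈ A, y j = update x i v j) →
      ∀ j ∈ A, update y i w j = update x i w j := by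
    intro y v w hy j hj
    by_cases hji : j = i
    · subst hji; simp
    · rw [update_of_ne hji, hy j hj, update_of_ne hji, update_of_ne hji]
  have apply_eq_of_agrees : ∀ (y : ι → V) (v : V), (∀ j ∈ A, y j = update x i v j) → y i = v :=
    fun y v hy => by simpa using hy i hi
  apply sum_nbij' (update · i w) (update · i v)
  · intro y hy
    simp only [mem_filter, mem_univ, true_and] at hy ⊢
    exact update_agrees y v w hy
  · intro y hy
    simp only [mem_filter, mem_univ, true_and] at hy ⊢
    exact update_agrees y w v hy
  · intro y hy
    simp only [mem_filter, mem_univ, true_and] at hy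
    simp [← apply_eq_of_agrees y v hy]
  · intro y hy
    simp only [mem_filter, mem_univ, true_and] at hy
    simp [← apply_eq_of_agrees y w hy]
  · intro y _
    exact (hg fun j hj => update_of_ne hj _ _).symm

theorem margin_div_margin_erase_of_mul {P f g : (ι → V) → ℝ} {A : Finset ι} {i : ι}
    (hP : ∀ y, P y = f y * g y) (hf : DependsOn f A) (hg : DependsOn g ({i}ᶜ : Set ι))
    (hgpos : ∀ y, 0 < g y) (hi : i ∈ A) (x : ι → V) :
    margin P A x / margin P (A.erase i) x = P x / margin P (univ.erase i) x := by
  obtain rfl : P = fun y => f y * g y := funext hP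
  have hgx : ∀ v, g (update x i v) = g x := fun v =>
    hg fun j hj => update_of_ne hj _ _
  have hmargin_gx : ∀ v, margin g A (update x i v) = margin g A x := fun v => by
    simpa using margin_update_of_dependsOn hg A x v (x i)
  rw [margin_erase _ hi, margin_erase _ (mem_univ i)]
  simp only [margin_univ, margin_mul_of_dependsOn hf]
  rw [div_sum_update_mul hmargin_gx (margin_pos hgpos A x).ne',
    div_sum_update_mul hgx (hgpos x).ne']

end Margin

section Passage

variable [Fintype ι] [DecidableEq ι] {G : SimpleGraph ι} {X : Finset ι} {B : G.Subgraph}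

theorem isPassage_compl : IsPassage G Xᶜ B ↔ IsPassage G X B := by
  simp only [IsPassage, compl_compl]
  constructor <;> exact fun ⟨h1, h2, h3⟩ => ⟨h2, h1, fun u hu v hv => (h3 v hv u hu).symm⟩

theorem IsPassage.verts_subset [DecidableRel G.Adj] (hB : IsPassage G X B) {i : ι}
    (hiB : i ∈ B.verts) (hiX : i ∈ X) : B.verts ⊆ ↑(X ∪ G.neighborFinset i) := by
  intro j hjB
  by_cases hjX : j ∈ X
  · simp [hjX]
  · have : B.Adj i j := hB.2.2 i ⟨hiB, hiX⟩ j ⟨hjB, by simpa using hjX⟩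
    simp [this.adj_sub]

end Passage

theorem margin_div_margin_erase_of_passage_factorization [Fintype ι] [DecidableEq ι] [Fintype V]
    [DecidableEq V] {P : (ι → V) → ℝ} {G : SimpleGraph ι} [DecidableRel G.Adj] {X : Finset ι}
    {φ : G.Subgraph → (ι → V) → ℝ} {c : ℝ} (hpos : ∀ x, 0 < P x)
    (hφpos : ∀ B, IsPassage G X B → ∀ x, 0 < φ B x)
    (hφdep : ∀ B, IsPassage G X B → DependsOn (φ B) B.verts)
    (hP : ∀ x, P x = margin P X x * margin P Xᶜ x * (c * ∏ B ∈ univ.filter (IsPassage G X), φ B x))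
    {i : ι} (hi : i ∈ X) (x : ι → V) :
    margin P (insert i ((X ∪ G.neighborFinset i).erase i)) x
        / margin P ((X ∪ G.neighborFinset i).erase i) x
      = P x / margin P (univ.erase i) x := by
  set passages := univ.filter (IsPassage G X)
  have isPassage_of_mem : ∀ {p : G.Subgraph → Prop} [DecidablePred p] {B},
      B ∈ passages.filter p → IsPassage G X B :=
    fun hB => (mem_filter.1 (mem_filter.1 hB).1).2
  have hiA : i ∈ X ∪ G.neighborFinset i := mem_union_left _ hi
  rw [insert_erase hiA]
  refine margin_div_margin_erase_of_mul
    (f := fun y => margin P X y * (c * ∏ B ∈ passages.filter (i ∈ ·.verts), φ B y))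
    (g := fun y => margin P Xᶜ y * ∏ B ∈ passages.filter (i ∉ ·.verts), φ B y)
    (fun y => ?_) (fun y z hyz => ?_) (fun y z hyz => ?_) (fun y => ?_) hiA x
  · rw [hP y, ← prod_filter_mul_prod_filter_not passages (i ∈ ·.verts)]
    ring
  · have hyzX : ∀ j ∈ X, y j = z j := fun j hj => hyz j (by simp [hj])
    dsimp only
    rw [dependsOn_margin P X hyzX]
    refine congrArg _ (congrArg _ (prod_congr rfl fun B hB => hφdep B (isPassage_of_mem hB) ?_))
    exact fun j hj => hyz j ((isPassage_of_mem hB).verts_subset (mem_filter.1 hB).2 hi hj)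
  · have hyzXc : ∀ j ∈ Xᶜ, y j = z j := fun j hj =>
      hyz j (by rintro rfl; exact mem_compl.1 hj hi)
    dsimp only
    rw [dependsOn_margin P Xᶜ hyzXc]
    refine congrArg _ (prod_congr rfl fun B hB => hφdep B (isPassage_of_mem hB) ?_)
    exact fun j hj => hyz j (by rintro rfl; exact (mem_filter.1 hB).2 hj)
  · exact mul_pos (margin_pos hpos _ _) (prod_pos fun B hB => hφpos B (isPassage_of_mem hB) y)

theorem gpr_is_pmn_general [Fintype ι] [DecidableEq ι] [Fintype V] [DecidableEq V]
    (P : (ι → V) → ℝ) (hpos : ∀ x, 0 < P x)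
    (G : SimpleGraph ι) [DecidableRel G.Adj] (X1 : Finset ι)
    (Z : ℝ)
    (φ : G.Subgraph → (ι → V) → ℝ)
    (hφpos : ∀ B : G.Subgraph, IsPassage G X1 B → ∀ x, 0 < φ B x)
    (hφdep : ∀ B : G.Subgraph, IsPassage G X1 B →
      ∀ x y : ι → V, (∀ i ∈ B.verts, x i = y i) → φ B x = φ B y)
    (hfact : ∀ x : ι → V,
      P x / (margin P X1 x * margin P X1ᶜ x)
        = (1 / Z) * ∏ B ∈ Finset.univ.filter (IsPassage G X1), φ B x) :
    IsPMN P G X1 := by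
  have hP : ∀ x, P x = margin P X1 x * margin P X1ᶜ x *
      ((1 / Z) * ∏ B ∈ univ.filter (IsPassage G X1), φ B x) := fun x => by
    rw [← hfact x, mul_div_cancel₀ _ (mul_pos (margin_pos hpos X1 x) (margin_pos hpos X1ᶜ x)).ne']
  have hP_compl : ∀ x, P x = margin P X1ᶜ x * margin P X1ᶜᶜ x *
      ((1 / Z) * ∏ B ∈ univ.filter (IsPassage G X1ᶜ), φ B x) := fun x => by
    simp only [compl_compl, isPassage_compl, mul_comm (margin P X1ᶜ x)]
    exact hP x
  exact ⟨fun i hi => margin_div_margin_erase_of_passage_factorization hpos hφpos hφdep hP hi,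
    fun i hi => margin_div_margin_erase_of_passage_factorization hpos
      (fun B hB => hφpos B (isPassage_compl.1 hB)) (fun B hB => hφdep B (isPassage_compl.1 hB))
      hP_compl hi⟩

/-- If the partitioned ratio `P(X1,X2)/(P(X1)P(X2))` of a strictly positive joint
distribution factorizes as `(1/Z) ∏_{B ∈ 𝐁(G)} φ_B(X_B)` over the set of passages
of `G`, then `P` is a partitioned Markov network with respect to `G`. -/
theorem gpr_is_pmn [Fintype ι] [DecidableEq ι] [Fintype V] [DecidableEq V]
    (P : (ι → V) → ℝ) (hpos : ∀ x, 0 < P x) (hsum : ∑ x : ι → V, P x = 1)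
    (G : SimpleGraph ι) [DecidableRel G.Adj] (X1 : Finset ι)
    (h1 : X1.Nonempty) (h2 : X1ᶜ.Nonempty)
    (Z : ℝ) (hZ : 0 < Z)
    (φ : G.Subgraph → (ι → V) → ℝ)
    (hφpos : ∀ B : G.Subgraph, IsPassage G X1 B → ∀ x, 0 < φ B x)
    (hφdep : ∀ B : G.Subgraph, IsPassage G X1 B →
      ∀ x y : ι → V, (∀ i ∈ B.verts, x i = y i) → φ B x = φ B y)
    (hfact : ∀ x : ι → V,
      P x / (margin P X1 x * margin P X1ᶜ x)
        = (1 / Z) * ∏ B ∈ Finset.univ.filter (IsPassage G X1), φ B x) :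
    IsPMN P G X1 :=
  gpr_is_pmn_general P hpos G X1 Z φ hφpos hφdep hfact
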